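/- arXiv:2309.06063 — 2 statements merged into one kernel-verified Lean document; each statement's English description precedes it below -/
import Mathlib

section
/- Characterization of invariance: let R be a nonzero commutative ring, S a linearly ordered set, H an augmented hypergraph on S, and s ∈ S. Then (1) ∂_i/∂s maps R_{n+1}(H) into R_n(H) for every n ≥ 0 and every 0 ≤ i ≤ n+1 if and only if for every σ ∈ H with s ∈ σ, if σ ∖ {s} ≠ ∅ then σ ∖ {s} ∈ H; and (2) π ∘ d_i s maps R_n(H) into R_{n+1}(H) for every n ≥ 0 and every 0 ≤ i ≤ n+1 if and only if for every nonempty σ ∈ H with s ∉ σ, one has σ ∪ {s} ∈ H. -/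
/-!
R⟨S⟩ₙ, the free R-module on words of length n+1 on a linearly ordered vertex
type S, is modeled as `(Fin (n+1) → S) →₀ R`. `pd R s n i = ∂ᵢ/∂s`,
`dd R s n i = dᵢs`, and `proj R k = π` is the projection onto the span of the
simplicial acyclic (strictly monotone) words. A hyperedge σ (a `Finset S`) with
σ.card = k is identified with its strictly increasing word `σ.orderEmbOfFin h`,
and `RH R k H` is the submodule Rₖ₋₁(H) spanned by the hyperedges of H with k
elements. Thus R_{n}(H) = `RH R (n+1) H`.
-/

noncomputable def pd {S : Type*} [DecidableEq S] (R : Type*) [CommRing R]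
    (s : S) (n : ℕ) (i : Fin (n + 1)) :
    ((Fin (n + 1) → S) →₀ R) →ₗ[R] ((Fin n → S) →₀ R) :=
  Finsupp.lift ((Fin n → S) →₀ R) R (Fin (n + 1) → S) fun w =>
    if w i = s then ((-1 : R) ^ (i : ℕ)) • Finsupp.single (i.removeNth w) 1 else 0

noncomputable def dd {S : Type*} (R : Type*) [CommRing R]
    (s : S) (n : ℕ) (i : Fin (n + 1)) :
    ((Fin n → S) →₀ R) →ₗ[R] ((Fin (n + 1) → S) →₀ R) :=
  Finsupp.lift ((Fin (n + 1) → S) →₀ R) R (Fin n → S) fun w =>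
    ((-1 : R) ^ (i : ℕ)) • Finsupp.single (i.insertNth s w) 1

open Classical in
noncomputable def proj {S : Type*} [LinearOrder S] (R : Type*) [CommRing R] (n : ℕ) :
    ((Fin n → S) →₀ R) →ₗ[R] ((Fin n → S) →₀ R) :=
  Finsupp.lift ((Fin n → S) →₀ R) R (Fin n → S) fun w =>
    if StrictMono w then Finsupp.single w 1 else 0

noncomputable def RH {S : Type*} [LinearOrder S] (R : Type*) [CommRing R] (n : ℕ)
    (H : Set (Finset S)) : Submodule R ((Fin n → S) →₀ R) :=
  Submodule.span R
    {x | ∃ σ ∈ H, ∃ h : σ.card = n, x = Finsupp.single (⇑(σ.orderEmbOfFin h)) 1}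

/-!
`RH R n H` is the coordinate submodule of the free module on words spanned by the increasing
words of the `n`-element hyperedges, so a linear map sends one such submodule into another iff it
does so on each of these basis words. On the increasing word of a hyperedge τ, `∂ᵢ/∂s` gives ±
the increasing word of `τ.erase s` when the `i`-th letter is `s` and `0` otherwise; `π ∘ dᵢs` on
the increasing word of σ gives ± the increasing word of `insert s σ` when inserting `s` at
position `i` keeps the word increasing and `0` otherwise. As `±1 ≠ 0` in a nonzero ring, both
invariance properties become conditions on the pairs `(τ, τ.erase s)` with `s ∈ τ` and `τ`
nontrivial, read in one direction for `∂ᵢ/∂s` and in the other for `π ∘ dᵢs`.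
-/

namespace Finsupp

variable {R : Type*} [Semiring R] {α β : Type*}

theorem forall_map_mem_supported_iff (f : (α →₀ R) →ₗ[R] (β →₀ R)) (A : Set α) (B : Set β) :
    (∀ x ∈ supported R R A, f x ∈ supported R R B) ↔
      ∀ a ∈ A, f (single a 1) ∈ supported R R B := by
  change supported R R A ≤ (supported R R B).comap f ↔ _
  rw [supported_eq_span_single, Submodule.span_le, Set.image_subset_iff]
  rfl

theorem single_mem_supported_iff {M : Type*} [AddCommMonoid M] [Module R M] {B : Set β}
    {b : β} {c : M} (hc : c ≠ 0) : single b c ∈ supported M R B ↔ b ∈ B := by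
  rw [mem_supported, support_single _ hc, Finset.coe_singleton,
    Set.singleton_subset_iff]

end Finsupp

namespace Fin

variable {S : Type*} [DecidableEq S] {n : ℕ}

theorem image_removeNth_univ {w : Fin (n + 1) → S} (hw : Function.Injective w)
    (i : Fin (n + 1)) :
    Finset.univ.image (i.removeNth w) = (Finset.univ.image w).erase (w i) := by
  rw [← Finset.image_erase hw, ← Finset.compl_singleton, ← Fin.image_succAbove_univ,
    Finset.image_image]
  rfl

end Fin

namespace Finset

variable {S : Type*} [DecidableEq S]

theorem forall_erase_mem_imp_mem_iff {H : Set (Finset S)} {s : S} :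
    (∀ τ : Finset S, s ∈ τ → τ.Nontrivial → τ.erase s ∈ H → τ ∈ H) ↔
      ∀ σ ∈ H, σ ≠ ∅ → s ∉ σ → insert s σ ∈ H := by
  constructor
  · intro h σ hσ hne hs
    refine h _ (mem_insert_self s σ) ?_ (by rwa [erase_insert hs])
    rw [← erase_nonempty (mem_insert_self s σ), erase_insert hs]
    exact nonempty_iff_ne_empty.2 hne
  · intro h τ hs hτ hH
    simpa [insert_erase hs] using h _ hH
      (nonempty_iff_ne_empty.1 ((erase_nonempty hs).2 hτ))
      (notMem_erase s τ)

end Finset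

section Formulas

variable {S : Type*} {R : Type*} [CommRing R]

theorem pd_single [DecidableEq S] (s : S) (n : ℕ) (i : Fin (n + 1)) (w : Fin (n + 1) → S) :
    pd R s n i (Finsupp.single w 1) =
      if w i = s then Finsupp.single (i.removeNth w) ((-1) ^ (i : ℕ)) else 0 := by
  rw [pd, Finsupp.lift_apply, Finsupp.sum_single_index (by simp)]
  split_ifs <;> simp [Finsupp.smul_single]

theorem dd_single (s : S) (n : ℕ) (i : Fin (n + 1)) (w : Fin n → S) :
    dd R s n i (Finsupp.single w 1) = Finsupp.single (i.insertNth s w) ((-1) ^ (i : ℕ)) := by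
  rw [dd, Finsupp.lift_apply, Finsupp.sum_single_index (by simp)]
  simp [Finsupp.smul_single]

open Classical in
theorem proj_single [LinearOrder S] (n : ℕ) (w : Fin n → S) (c : R) :
    proj R n (Finsupp.single w c) = if StrictMono w then Finsupp.single w c else 0 := by
  rw [proj, Finsupp.lift_apply, Finsupp.sum_single_index (by simp)]
  split_ifs <;> simp [Finsupp.smul_single]

end Formulas

section Words

variable {S : Type*} [LinearOrder S]

def hyperedgeWords (H : Set (Finset S)) (n : ℕ) : Set (Fin n → S) :=
  {w | StrictMono w ∧ Finset.univ.image w ∈ H}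

theorem exists_orderEmbOfFin_eq_iff {H : Set (Finset S)} {n : ℕ} {w : Fin n → S} :
    (∃ σ ∈ H, ∃ h : σ.card = n, w = σ.orderEmbOfFin h) ↔ w ∈ hyperedgeWords H n := by
  constructor
  · rintro ⟨σ, hσ, h, rfl⟩
    exact ⟨(σ.orderEmbOfFin h).strictMono, by rwa [Finset.image_orderEmbOfFin_univ]⟩
  · rintro ⟨hw, hH⟩
    have hcard : (Finset.univ.image w).card = n := by
      rw [Finset.card_image_of_injective _ hw.injective, Finset.card_fin]
    exact ⟨_, hH, hcard, Finset.orderEmbOfFin_unique hcard (by simp) hw⟩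

theorem RH_eq_supported (R : Type*) [CommRing R] (n : ℕ) (H : Set (Finset S)) :
    RH R n H = Finsupp.supported R R (hyperedgeWords H n) := by
  rw [RH, Finsupp.supported_eq_span_single]
  congr 1
  ext x
  constructor
  · rintro ⟨σ, hσ, h, rfl⟩
    exact ⟨_, exists_orderEmbOfFin_eq_iff.1 ⟨σ, hσ, h, rfl⟩, rfl⟩
  · rintro ⟨w, hw, rfl⟩
    obtain ⟨σ, hσ, h, rfl⟩ := exists_orderEmbOfFin_eq_iff.2 hw
    exact ⟨σ, hσ, h, rfl⟩

theorem forall_strictMono_removeNth_iff {s : S} {P : Finset S → Finset S → Prop} :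
    (∀ (n : ℕ) (i : Fin (n + 2)) (v : Fin (n + 2) → S), StrictMono v → v i = s →
      P (Finset.univ.image v) (Finset.univ.image (i.removeNth v))) ↔
      ∀ τ : Finset S, s ∈ τ → τ.Nontrivial → P τ (τ.erase s) := by
  constructor
  · intro h τ hs hτ
    obtain ⟨n, hn⟩ : ∃ n, τ.card = n + 2 :=
      ⟨τ.card - 2, by have := Finset.one_lt_card_iff_nontrivial.2 hτ; omega⟩
    have himage := τ.image_orderEmbOfFin_univ hn
    obtain ⟨i, -, hi⟩ := Finset.mem_image.1 (himage ▸ hs)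
    have := h n i _ (τ.orderEmbOfFin hn).strictMono hi
    rwa [Fin.image_removeNth_univ (τ.orderEmbOfFin hn).injective, hi, himage] at this
  · rintro h n i v hv rfl
    rw [Fin.image_removeNth_univ hv.injective]
    refine h _ (Finset.mem_image_of_mem _ (Finset.mem_univ i)) ?_
    rw [← Finset.one_lt_card_iff_nontrivial, Finset.card_image_of_injective _ hv.injective,
      Finset.card_fin]
    omega

theorem forall_map_mem_RH_iff {R : Type*} [CommRing R] {H : Set (Finset S)} {m n : ℕ}
    (f : ((Fin m → S) →₀ R) →ₗ[R] ((Fin n → S) →₀ R)) :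
    (∀ x ∈ RH R m H, f x ∈ RH R n H) ↔
      ∀ w ∈ hyperedgeWords H m, f (Finsupp.single w 1) ∈ RH R n H := by
  simp only [RH_eq_supported, Finsupp.forall_map_mem_supported_iff]

end Words

section Invariance

variable {S : Type*} [LinearOrder S] {R : Type*} [CommRing R] [Nontrivial R]
  {H : Set (Finset S)} {s : S}

theorem pd_single_mem_RH_iff {n : ℕ} {i : Fin (n + 1)} {w : Fin (n + 1) → S}
    (hw : StrictMono w) :
    pd R s n i (Finsupp.single w 1) ∈ RH R n H ↔
      (w i = s → Finset.univ.image (i.removeNth w) ∈ H) := by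
  rw [pd_single]
  split_ifs with hi
  · rw [RH_eq_supported, Finsupp.single_mem_supported_iff (neg_one_pow_ne_zero _)]
    simp [hyperedgeWords, hi, hw.removeNth i]
  · simp [hi]

theorem proj_dd_single_mem_RH_iff {n : ℕ} {i : Fin (n + 1)} {w : Fin n → S} :
    proj R (n + 1) (dd R s n i (Finsupp.single w 1)) ∈ RH R (n + 1) H ↔
      (StrictMono (i.insertNth s w) → Finset.univ.image (i.insertNth s w) ∈ H) := by
  rw [dd_single, proj_single]
  split_ifs with hv
  · rw [RH_eq_supported, Finsupp.single_mem_supported_iff (neg_one_pow_ne_zero _)]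
    simp [hyperedgeWords, hv]
  · simp [hv]

theorem forall_pd_mem_RH_iff :
    (∀ (n : ℕ) (i : Fin (n + 2)), ∀ x ∈ RH R (n + 2) H, pd R s (n + 1) i x ∈ RH R (n + 1) H) ↔
      ∀ σ ∈ H, s ∈ σ → σ.erase s ≠ ∅ → σ.erase s ∈ H := by
  calc _ ↔ ∀ (n : ℕ) (i : Fin (n + 2)) (v : Fin (n + 2) → S), StrictMono v → v i = s →
          Finset.univ.image v ∈ H → Finset.univ.image (i.removeNth v) ∈ H := by
        simp only [forall_map_mem_RH_iff, hyperedgeWords, Set.mem_ofPred_eq, and_imp]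
        refine forall₂_congr fun n i => forall₂_congr fun v hv => ?_
        rw [pd_single_mem_RH_iff hv, imp.swap]
    _ ↔ ∀ τ : Finset S, s ∈ τ → τ.Nontrivial → τ ∈ H → τ.erase s ∈ H :=
        forall_strictMono_removeNth_iff (P := fun τ ρ => τ ∈ H → ρ ∈ H)
    _ ↔ _ := by
        simp only [← Finset.nonempty_iff_ne_empty]
        exact forall_congr' fun τ => ⟨fun h hH hs hne => h hs ((Finset.erase_nonempty hs).1 hne) hH,
          fun h hs hτ hH => h hH hs ((Finset.erase_nonempty hs).2 hτ)⟩

theorem forall_proj_dd_mem_RH_iff :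
    (∀ (n : ℕ) (i : Fin (n + 2)), ∀ x ∈ RH R (n + 1) H,
        proj R (n + 2) (dd R s (n + 1) i x) ∈ RH R (n + 2) H) ↔
      ∀ σ ∈ H, σ ≠ ∅ → s ∉ σ → insert s σ ∈ H := by
  calc _ ↔ ∀ (n : ℕ) (i : Fin (n + 2)) (w : Fin (n + 1) → S), StrictMono w →
          Finset.univ.image w ∈ H → StrictMono (i.insertNth s w) →
          Finset.univ.image (i.insertNth s w) ∈ H := by
        refine forall₂_congr fun n i => ?_
        refine (forall_map_mem_RH_iff ((proj R (n + 2)).comp (dd R s (n + 1) i))).trans ?_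
        simp only [hyperedgeWords, Set.mem_ofPred_eq, and_imp, LinearMap.comp_apply,
          proj_dd_single_mem_RH_iff]
    _ ↔ ∀ (n : ℕ) (i : Fin (n + 2)) (v : Fin (n + 2) → S), StrictMono v → v i = s →
          Finset.univ.image (i.removeNth v) ∈ H → Finset.univ.image v ∈ H := by
        refine forall₂_congr fun n i => ⟨fun h v hv hi hH => ?_, fun h w _ hH hv => ?_⟩
        · have := h (i.removeNth v) (hv.removeNth i) hH
          rw [← hi, Fin.insertNth_self_removeNth] at this
          exact this hv
        · simpa using h _ hv (by simp) (by simpa using hH)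
    _ ↔ ∀ τ : Finset S, s ∈ τ → τ.Nontrivial → τ.erase s ∈ H → τ ∈ H :=
        forall_strictMono_removeNth_iff (P := fun τ ρ => ρ ∈ H → τ ∈ H)
    _ ↔ _ := Finset.forall_erase_mem_imp_mem_iff

end Invariance

/-- characterization of invariance: let R be a nonzero commutative
ring, S a linearly ordered vertex type, H an augmented hypergraph on S and s ∈ S.
(1) ∂ᵢ/∂s maps R_{n+1}(H) into R_n(H) for every n ≥ 0 and 0 ≤ i ≤ n+1 iff for
every σ ∈ H with s ∈ σ, σ ∖ {s} ≠ ∅ implies σ ∖ {s} ∈ H.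
(2) π ∘ dᵢs maps R_n(H) into R_{n+1}(H) for every n ≥ 0 and 0 ≤ i ≤ n+1 iff for
every nonempty σ ∈ H with s ∉ σ, σ ∪ {s} ∈ H. -/
theorem invariance_characterization {S : Type*} [LinearOrder S]
    (R : Type*) [CommRing R] [Nontrivial R]
    (H : Set (Finset S)) (s : S) :
    ((∀ (n : ℕ) (i : Fin (n + 2)), ∀ x ∈ RH R (n + 2) H,
        pd R s (n + 1) i x ∈ RH R (n + 1) H)
      ↔ (∀ σ ∈ H, s ∈ σ → σ.erase s ≠ ∅ → σ.erase s ∈ H))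
    ∧ ((∀ (n : ℕ) (i : Fin (n + 2)), ∀ x ∈ RH R (n + 1) H,
        proj R (n + 2) (dd R s (n + 1) i x) ∈ RH R (n + 2) H)
      ↔ (∀ σ ∈ H, σ ≠ ∅ → s ∉ σ → insert s σ ∈ H)) :=
  ⟨forall_pd_mem_RH_iff, forall_proj_dd_mem_RH_iff⟩
end

section
/- Invariant traces are simplicial complexes: let H be an augmented hypergraph on S and let S(H,∂) = {s ∈ S : for every σ ∈ H with s ∈ σ, if σ ∖ {s} ≠ ∅ then σ ∖ {s} ∈ H} (the set of s for which R_*(H) is ∂/∂s-invariant). Then the trace H∥_{S(H,∂)} is an augmented simplicial complex on S(H,∂). Moreover, if K is an augmented simplicial complex on S, then S(K,∂) = S. -/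
/-!
An augmented hypergraph on a vertex type S is a set of finsets of S
(`Set (Finset S)`), possibly containing ∅. `finter σ T` is σ ∩ T for T ⊆ S and
`htrace H T` is the trace H∥_T. `IsASC` means augmented simplicial complex.
`Spart H = S(H,∂)` is the set of vertices s for which R_*(H) is ∂/∂s-invariant,
described combinatorially.
-/

noncomputable def finter {S : Type*} (σ : Finset S) (T : Set S) : Finset S :=
  @Finset.filter S (fun a => a ∈ T) (Classical.decPred _) σ

noncomputable def htrace {S : Type*} (H : Set (Finset S)) (T : Set S) :
    Set (Finset S) :=
  {τ | (∃ σ ∈ H, finter σ T = τ) ∧ τ ≠ ∅}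
    ∪ {τ | τ = ∅ ∧ (∅ : Finset S) ∈ H}

def IsASC {S : Type*} (H : Set (Finset S)) : Prop :=
  ∀ σ ∈ H, ∀ τ ⊆ σ, τ ≠ ∅ → τ ∈ H

def Spart {S : Type*} [DecidableEq S] (H : Set (Finset S)) : Set S :=
  {s | ∀ σ ∈ H, s ∈ σ → σ.erase s ≠ ∅ → σ.erase s ∈ H}

/-!
Removing from a hyperedge σ of H any vertices of S(H,∂) one at a time keeps it in H, as long as
something is left. Hence every nonempty τ ⊆ σ ∩ T with T ⊆ S(H,∂) is the trace on T of the
hyperedge σ ∖ ((σ ∩ T) ∖ τ) ∈ H, so traces on subsets of S(H,∂) are closed under nonempty subsets.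
-/

@[simp]
lemma mem_finter {S : Type*} {σ : Finset S} {T : Set S} {a : S} :
    a ∈ finter σ T ↔ a ∈ σ ∧ a ∈ T := by
  simp [finter]

section

variable {S : Type*} [DecidableEq S] {H : Set (Finset S)}

lemma erase_mem_of_mem_Spart {σ : Finset S} {s : S} (hs : s ∈ Spart H) (hσ : σ ∈ H)
    (hne : (σ.erase s).Nonempty) : σ.erase s ∈ H := by
  by_cases hsσ : s ∈ σ
  · exact hs σ hσ hsσ hne.ne_empty
  · rwa [Finset.erase_eq_of_notMem hsσ]

lemma sdiff_mem_of_subset_Spart {σ D : Finset S} (hσ : σ ∈ H) (hD : ↑D ⊆ Spart H)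
    (hne : (σ \ D).Nonempty) : σ \ D ∈ H := by
  induction D using Finset.induction_on with
  | empty => simpa using hσ
  | insert a D _ ih =>
    rw [Finset.coe_insert, Set.insert_subset_iff] at hD
    rw [Finset.sdiff_insert] at hne ⊢
    exact erase_mem_of_mem_Spart hD.1 (ih hD.2 (hne.mono (Finset.erase_subset a _))) hne

lemma isASC_htrace_of_subset_Spart {T : Set S} (hT : T ⊆ Spart H) : IsASC (htrace H T) := by
  rintro _ (⟨⟨σ, hσ, rfl⟩, -⟩ | ⟨rfl, -⟩) τ hτσ hτ
  · have hD : ↑(finter σ T \ τ) ⊆ Spart H := fun a ha =>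
      hT (mem_finter.1 (Finset.mem_sdiff.1 ha).1).2
    have hτ_sub : τ ⊆ σ \ (finter σ T \ τ) := fun a ha =>
      Finset.mem_sdiff.2 ⟨(mem_finter.1 (hτσ ha)).1, fun h => (Finset.mem_sdiff.1 h).2 ha⟩
    refine Or.inl ⟨⟨_, sdiff_mem_of_subset_Spart hσ hD
      ((Finset.nonempty_iff_ne_empty.2 hτ).mono hτ_sub), ?_⟩, hτ⟩
    ext a
    have := @hτσ a
    simp only [mem_finter, Finset.mem_sdiff] at this ⊢
    tauto
  · exact absurd (Finset.subset_empty.1 hτσ) hτ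

lemma Spart_eq_univ_of_isASC {K : Set (Finset S)} (hK : IsASC K) : Spart K = Set.univ :=
  Set.eq_univ_of_forall fun s σ hσ _ hne => hK σ hσ _ (Finset.erase_subset s σ) hne

end

/-- invariant traces are simplicial complexes: for every augmented
hypergraph H on S, the trace H∥_{S(H,∂)} is an augmented simplicial complex on
S(H,∂); moreover if K is an augmented simplicial complex on S then S(K,∂) = S. -/
theorem trace_Spart_isASC {S : Type*} [DecidableEq S] (H : Set (Finset S)) :
    IsASC (htrace H (Spart H))
    ∧ (∀ K : Set (Finset S), IsASC K → Spart K = Set.univ) :=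
  ⟨isASC_htrace_of_subset_Spart subset_rfl, fun _ => Spart_eq_univ_of_isASC⟩
end
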